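/- Let T be an odd positive integer, c an integer with c ≥ 0, α, ρ real with |α| < 1/2 and |ρ| ≤ (T−1)/(2T), γ real with 0 < γ ≤ T, β > 0 real, δ real with |δ| ≤ 1, d ∈ 1/2 + ℤ, and set λ := √β·γ/√T. There is a constant C = C(c,d,T,α,β,γ,δ,ρ) > 0 such that in the circle-method setup: |∫_{ϑ''}^{1/(kN)} z^d·e^{(πz/k)(2n+δ)}·λ·(∫_{−1}^{1} (λx+iρ)^c·e^{−πβ(x²−1)/(kz) + 2πλαx}/cosh(π(λx+iρ)) dx) dφ| ≤ C·(1/(k√n))·(n/k)^{|d|}, where z := k/n − ikφ; and the same bound holds for the integral over φ ∈ [−1/(kN), −ϑ']. -/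

import Mathlib

open Complex Real

/-!
On both tails `1/(2kN) ≤ |φ| ≤ 1/(kN)`, so the integrand is bounded pointwise by a constant
times `(n/k)^{|d|}`: `k/n ≤ |z| ≤ 2` controls `z^d`, `Re (πz/k · (2n+δ)) = π(2 + δ/n)` is
bounded, and the lower bound on `|φ|` gives `0 ≤ Re (1/(kz)) ≤ 1/(n (kφ)²) ≤ 4N²/n ≤ 4`, which
keeps the Gaussian factor of the inner integral bounded. The denominator never vanishes since
`|cosh(a + bi)| ≥ cosh a · cos b ≥ cos(πρ) > 0` for `|ρ| < 1/2`. Each tail has length at most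
`1/(2kN) ≤ 1/(k√n)`.
-/

lemma Complex.cosh_re (z : ℂ) : (cosh z).re = Real.cosh z.re * Real.cos z.im := by
  conv_lhs => rw [← re_add_im z]
  rw [cosh_add, cosh_mul_I, sinh_mul_I]
  simp [← ofReal_cosh, ← ofReal_sinh, ← ofReal_cos, ← ofReal_sin]

lemma Complex.cos_im_le_norm_cosh (z : ℂ) : Real.cos z.im ≤ ‖cosh z‖ := by
  rcases le_or_gt (Real.cos z.im) 0 with h | h
  · exact h.trans (norm_nonneg _)
  calc Real.cos z.im ≤ Real.cosh z.re * Real.cos z.im :=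
        le_mul_of_one_le_left h.le (Real.one_le_cosh _)
    _ = (cosh z).re := (cosh_re z).symm
    _ ≤ ‖cosh z‖ := re_le_norm _

lemma Complex.inv_re_le_re_div_im_sq {w : ℂ} (hre : 0 ≤ w.re) (him : w.im ≠ 0) :
    (w⁻¹).re ≤ w.re / w.im ^ 2 := by
  rw [inv_re, normSq_apply]
  exact div_le_div_of_nonneg_left hre (by positivity) (by nlinarith [sq_nonneg w.re])

lemma Real.rpow_le_div_rpow_abs {x m M : ℝ} (d : ℝ) (hm : 0 < m) (hmx : m ≤ x) (hxM : x ≤ M)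
    (hm1 : m ≤ 1) (hM : 1 ≤ M) : x ^ d ≤ (M / m) ^ |d| := by
  have hx : 0 < x := hm.trans_le hmx
  rcases le_or_gt 0 d with hd | hd
  · rw [abs_of_nonneg hd]
    exact rpow_le_rpow hx.le (hxM.trans (le_div_self (by linarith) hm hm1)) hd
  · rw [abs_of_neg hd]
    calc x ^ d ≤ m ^ d := rpow_le_rpow_of_nonpos hm hmx hd.le
      _ = m⁻¹ ^ (-d) := by rw [← rpow_neg_eq_inv_rpow, neg_neg]
      _ ≤ (M / m) ^ (-d) := by
        refine rpow_le_rpow (by positivity) ?_ (by linarith)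
        rw [inv_eq_one_div]
        gcongr

noncomputable section

/-- The circle-method variable `z = k/n − ikφ`. -/
def arcPoint (n k : ℕ) (φ : ℝ) : ℂ := (k : ℂ) / n - I * k * φ

/-- `lam` is `λ = √β γ / √T`, and `w` stands for `k z`. -/
def innerIntegrand (c : ℕ) (lam α β ρ : ℝ) (w : ℂ) (x : ℝ) : ℂ :=
  ((lam : ℂ) * x + I * ρ) ^ c *
      Complex.exp (-(π : ℂ) * β * ((x : ℂ) ^ 2 - 1) / w + 2 * π * lam * α * x) /
    cosh (π * ((lam : ℂ) * x + I * ρ))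

def arcIntegrand (n k c : ℕ) (lam α β ρ δ d φ : ℝ) : ℂ :=
  arcPoint n k φ ^ (d : ℂ) * Complex.exp (π * arcPoint n k φ / k * (2 * n + δ)) *
    (lam * ∫ x : ℝ in (-1 : ℝ)..1, innerIntegrand c lam α β ρ (k * arcPoint n k φ) x)

lemma cos_pi_mul_pos {ρ : ℝ} (hρ : |ρ| < 1 / 2) : 0 < Real.cos (π * ρ) := by
  apply Real.cos_pos_of_mem_Ioo
  constructor <;> nlinarith [abs_lt.1 hρ, Real.pi_pos]

def innerBound (c : ℕ) (lam α β ρ R : ℝ) : ℝ :=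
  (|lam| + |ρ|) ^ c * Real.exp (π * |β| * R + 2 * π * |lam * α|) / Real.cos (π * ρ)

lemma norm_innerIntegrand_le {c : ℕ} {lam α β ρ R x : ℝ} {w : ℂ} (hρ : |ρ| < 1 / 2)
    (hw : |(w⁻¹).re| ≤ R) (hx : |x| ≤ 1) :
    ‖innerIntegrand c lam α β ρ w x‖ ≤ innerBound c lam α β ρ R := by
  have hcos := cos_pi_mul_pos hρ
  have hpow : ‖(lam : ℂ) * x + I * ρ‖ ≤ |lam| + |ρ| := by
    refine (norm_add_le _ _).trans ?_
    simp only [norm_mul, norm_real, norm_I, Real.norm_eq_abs, one_mul]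
    gcongr
    exact mul_le_of_le_one_right (abs_nonneg _) hx
  have hexp : (-(π : ℂ) * β * ((x : ℂ) ^ 2 - 1) / w + 2 * π * lam * α * x).re ≤
      π * |β| * R + 2 * π * |lam * α| := by
    have hre : (-(π : ℂ) * β * ((x : ℂ) ^ 2 - 1) / w + 2 * π * lam * α * x).re =
        π * β * (1 - x ^ 2) * (w⁻¹).re + 2 * π * (lam * α) * x := by
      have : -(π : ℂ) * β * ((x : ℂ) ^ 2 - 1) / w + 2 * π * lam * α * x =
          ((π * β * (1 - x ^ 2) : ℝ) : ℂ) * w⁻¹ + ((2 * π * (lam * α) * x : ℝ) : ℂ) := by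
        push_cast; ring
      rw [this, add_re, re_ofReal_mul, ofReal_re]
    have hx2 : |1 - x ^ 2| ≤ 1 := by
      rw [abs_le]; constructor <;> nlinarith [abs_le.1 hx]
    rw [hre]
    refine add_le_add ?_ ?_
    · calc π * β * (1 - x ^ 2) * (w⁻¹).re ≤ |π * β * (1 - x ^ 2) * (w⁻¹).re| := le_abs_self _
        _ = π * |β| * |1 - x ^ 2| * |(w⁻¹).re| := by
          rw [abs_mul, abs_mul, abs_mul, abs_of_pos Real.pi_pos]
        _ ≤ π * |β| * 1 * R := by gcongr
        _ = π * |β| * R := by ring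
    · calc 2 * π * (lam * α) * x ≤ |2 * π * (lam * α) * x| := le_abs_self _
        _ = 2 * π * |lam * α| * |x| := by
          rw [abs_mul, abs_mul, abs_mul, abs_of_pos Real.pi_pos, abs_two]
        _ ≤ 2 * π * |lam * α| := mul_le_of_le_one_right (by positivity) hx
  have hcosh : Real.cos (π * ρ) ≤ ‖cosh (π * ((lam : ℂ) * x + I * ρ))‖ := by
    simpa using cos_im_le_norm_cosh (π * ((lam : ℂ) * x + I * ρ))
  rw [innerIntegrand, innerBound, norm_div, norm_mul, norm_pow, norm_exp]
  gcongr

section Arc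

variable {n k : ℕ} {φ : ℝ}

lemma arcPoint_re : (arcPoint n k φ).re = k / n := by simp [arcPoint]

lemma arcPoint_im : (arcPoint n k φ).im = -(k * φ) := by simp [arcPoint]

lemma norm_arcPoint_le_two (hk : 1 ≤ k) (hkN : k ≤ Nat.sqrt n)
    (hφ : |φ| ≤ 1 / (k * Nat.sqrt n)) : ‖arcPoint n k φ‖ ≤ 2 := by
  have hk0 : (0 : ℝ) < k := by exact_mod_cast hk
  have hN : (1 : ℝ) ≤ Nat.sqrt n := by exact_mod_cast hk.trans hkN
  have hkn : (k : ℝ) ≤ n := by exact_mod_cast hkN.trans (Nat.sqrt_le_self n)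
  have hre : |(arcPoint n k φ).re| ≤ 1 := by
    rw [arcPoint_re, abs_of_nonneg (by positivity)]
    exact div_le_one_of_le₀ hkn (by positivity)
  have him : |(arcPoint n k φ).im| ≤ 1 := by
    rw [arcPoint_im, abs_neg, abs_mul, Nat.abs_cast]
    calc (k : ℝ) * |φ| ≤ k * (1 / (k * Nat.sqrt n)) := by gcongr
      _ = 1 / Nat.sqrt n := by field_simp
      _ ≤ 1 := div_le_one_of_le₀ hN (by positivity)
  linarith [norm_le_abs_re_add_abs_im (arcPoint n k φ)]

lemma abs_inv_re_natCast_mul_arcPoint_le_four (hk : 1 ≤ k) (hkN : k ≤ Nat.sqrt n)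
    (hφ : 1 / (2 * k * Nat.sqrt n) ≤ |φ|) : |((k * arcPoint n k φ)⁻¹).re| ≤ 4 := by
  have hk0 : (0 : ℝ) < k := by exact_mod_cast hk
  have hN0 : (0 : ℝ) < Nat.sqrt n := by exact_mod_cast hk.trans hkN
  have hn0 : (0 : ℝ) < n := by exact_mod_cast (hk.trans hkN).trans (Nat.sqrt_le_self n)
  have hNn : (Nat.sqrt n : ℝ) ^ 2 ≤ n := by exact_mod_cast Nat.sqrt_le' n
  have hkφ : 1 / (2 * Nat.sqrt n) ≤ |k * φ| := by
    calc (1 : ℝ) / (2 * Nat.sqrt n) = k * (1 / (2 * k * Nat.sqrt n)) := by field_simp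
      _ ≤ k * |φ| := by gcongr
      _ = |k * φ| := by rw [abs_mul, Nat.abs_cast]
  have hkφ0 : k * φ ≠ 0 := abs_pos.1 ((by positivity : (0 : ℝ) < 1 / (2 * Nat.sqrt n)).trans_le hkφ)
  have hre : ((k : ℂ) * arcPoint n k φ).re = k ^ 2 / n := by
    simp [arcPoint]; ring
  have him : ((k : ℂ) * arcPoint n k φ).im = -(k * (k * φ)) := by
    simp [arcPoint]
  rw [abs_of_nonneg (by rw [inv_re, hre]; exact div_nonneg (by positivity) (normSq_nonneg _))]
  calc ((k * arcPoint n k φ)⁻¹).re ≤ k ^ 2 / n / (-(k * (k * φ))) ^ 2 := by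
        rw [← hre, ← him]
        exact inv_re_le_re_div_im_sq (by rw [hre]; positivity) (by rw [him]; simp [hk0.ne', hkφ0])
    _ = 1 / (n * (k * φ) ^ 2) := by field_simp
    _ ≤ 1 / (n * (1 / (2 * Nat.sqrt n)) ^ 2) := by
        have : (1 / (2 * Nat.sqrt n : ℝ)) ^ 2 ≤ (k * φ) ^ 2 := by
          rw [← sq_abs (k * φ)]
          exact pow_le_pow_left₀ (by positivity) hkφ 2
        gcongr
    _ ≤ 4 := by
        rw [div_le_iff₀ (by positivity)]
        field_simp
        linarith

lemma norm_exp_arcPoint_le (δ : ℝ) (hk : 1 ≤ k) (hkN : k ≤ Nat.sqrt n) :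
    ‖Complex.exp (π * arcPoint n k φ / k * (2 * n + δ))‖ ≤ Real.exp (π * (2 + |δ|)) := by
  have hk0 : (0 : ℝ) < k := by exact_mod_cast hk
  have hn1 : (1 : ℝ) ≤ n := by exact_mod_cast (hk.trans hkN).trans (Nat.sqrt_le_self n)
  have hre : (π * arcPoint n k φ / k * (2 * n + δ)).re = π * (2 + δ / n) := by
    have : (π : ℂ) * arcPoint n k φ / k * (2 * n + δ) =
        ((π / k * (2 * n + δ) : ℝ) : ℂ) * arcPoint n k φ := by
      push_cast; ring
    rw [this, re_ofReal_mul, arcPoint_re]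
    field_simp
  rw [norm_exp, hre]
  gcongr
  exact (div_le_div_of_nonneg_right (le_abs_self δ) (by positivity)).trans
    (div_le_self (abs_nonneg δ) hn1)

lemma norm_integral_innerIntegrand_le {c : ℕ} {lam α β ρ R : ℝ} {w : ℂ} (hρ : |ρ| < 1 / 2)
    (hw : |(w⁻¹).re| ≤ R) :
    ‖∫ x : ℝ in (-1 : ℝ)..1, innerIntegrand c lam α β ρ w x‖ ≤ 2 * innerBound c lam α β ρ R := by
  have hbound : ∀ x ∈ Set.uIoc (-1 : ℝ) 1,
      ‖innerIntegrand c lam α β ρ w x‖ ≤ innerBound c lam α β ρ R := by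
    intro x hx
    rw [Set.uIoc_of_le (by norm_num)] at hx
    exact norm_innerIntegrand_le hρ hw (abs_le.2 ⟨hx.1.le, hx.2⟩)
  calc _ ≤ innerBound c lam α β ρ R * |1 - (-1 : ℝ)| :=
        intervalIntegral.norm_integral_le_of_norm_le_const hbound
    _ = 2 * innerBound c lam α β ρ R := by norm_num; ring

def arcBound (c : ℕ) (lam α β ρ δ d : ℝ) : ℝ :=
  2 ^ |d| * Real.exp (π * (2 + |δ|)) * (|lam| * (2 * innerBound c lam α β ρ 4))

lemma arcBound_nonneg {c : ℕ} {lam α β ρ δ d : ℝ} (hρ : |ρ| < 1 / 2) :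
    0 ≤ arcBound c lam α β ρ δ d := by
  have := cos_pi_mul_pos hρ
  unfold arcBound innerBound
  positivity

lemma arcBound_pos {c : ℕ} {lam α β ρ δ d : ℝ} (hlam : lam ≠ 0) (hρ : |ρ| < 1 / 2) :
    0 < arcBound c lam α β ρ δ d := by
  have := cos_pi_mul_pos hρ
  have := abs_pos.2 hlam
  unfold arcBound innerBound
  positivity

lemma norm_arcIntegrand_le (c : ℕ) (lam α β δ d : ℝ) {ρ : ℝ} (hρ : |ρ| < 1 / 2)
    (hk : 1 ≤ k) (hkN : k ≤ Nat.sqrt n) (hφ : 1 / (2 * k * Nat.sqrt n) ≤ |φ|)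
    (hφ' : |φ| ≤ 1 / (k * Nat.sqrt n)) :
    ‖arcIntegrand n k c lam α β ρ δ d φ‖ ≤ arcBound c lam α β ρ δ d * (n / k) ^ |d| := by
  have hk0 : (0 : ℝ) < k := by exact_mod_cast hk
  have hkn : (k : ℝ) ≤ n := by exact_mod_cast hkN.trans (Nat.sqrt_le_self n)
  have hn0 : (0 : ℝ) < n := hk0.trans_le hkn
  have hpow : ‖arcPoint n k φ‖ ^ d ≤ 2 ^ |d| * (n / k) ^ |d| := by
    have := rpow_le_div_rpow_abs d (by positivity) (arcPoint_re (φ := φ) ▸ re_le_norm _)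
      (norm_arcPoint_le_two hk hkN hφ') (div_le_one_of_le₀ hkn (by positivity)) one_le_two
    rwa [div_div_eq_mul_div, mul_div_assoc, mul_rpow zero_le_two (by positivity)] at this
  have hinner := norm_integral_innerIntegrand_le (c := c) (lam := lam) (α := α) (β := β) hρ
    (abs_inv_re_natCast_mul_arcPoint_le_four hk hkN hφ)
  rw [arcIntegrand, norm_mul, norm_mul, norm_mul, norm_real, norm_cpow_real, Real.norm_eq_abs]
  calc _ ≤ 2 ^ |d| * (n / k) ^ |d| * Real.exp (π * (2 + |δ|)) *
        (|lam| * (2 * innerBound c lam α β ρ 4)) := by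
        gcongr
        exact norm_exp_arcPoint_le δ hk hkN
    _ = arcBound c lam α β ρ δ d * (n / k) ^ |d| := by unfold arcBound; ring

lemma one_div_two_mul_nat_sqrt_le (hk : 1 ≤ k) (hkN : k ≤ Nat.sqrt n) :
    1 / (2 * k * Nat.sqrt n) ≤ 1 / (k * Real.sqrt n) := by
  have hN : (1 : ℝ) ≤ Nat.sqrt n := by exact_mod_cast hk.trans hkN
  have hk0 : (0 : ℝ) < k := by exact_mod_cast hk
  have : Real.sqrt n ≤ 2 * Nat.sqrt n := by linarith [Real.real_sqrt_le_nat_sqrt_succ (a := n)]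
  have : 0 < Real.sqrt n := by linarith [Real.nat_sqrt_le_real_sqrt (a := n)]
  apply one_div_le_one_div_of_le (by positivity)
  nlinarith

lemma norm_integral_arcIntegrand_le (c : ℕ) (lam α β δ d : ℝ) {ρ a b : ℝ} (hρ : |ρ| < 1 / 2)
    (hk : 1 ≤ k) (hkN : k ≤ Nat.sqrt n) (hab : a ≤ b) (hlen : b - a ≤ 1 / (2 * k * Nat.sqrt n))
    (hφ : ∀ φ ∈ Set.Ioc a b, 1 / (2 * k * Nat.sqrt n) ≤ |φ| ∧ |φ| ≤ 1 / (k * Nat.sqrt n)) :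
    ‖∫ φ in a..b, arcIntegrand n k c lam α β ρ δ d φ‖ ≤
      arcBound c lam α β ρ δ d * (1 / (k * Real.sqrt n)) * (n / k) ^ |d| := by
  have hint := intervalIntegral.norm_integral_le_of_norm_le_const fun φ hφab =>
    norm_arcIntegrand_le c lam α β δ d hρ hk hkN
      (hφ φ (Set.uIoc_of_le hab ▸ hφab)).1 (hφ φ (Set.uIoc_of_le hab ▸ hφab)).2
  have := arcBound_nonneg (c := c) (lam := lam) (α := α) (β := β) (δ := δ) (d := d) hρ
  calc _ ≤ arcBound c lam α β ρ δ d * (n / k) ^ |d| * |b - a| := hint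
    _ ≤ arcBound c lam α β ρ δ d * (n / k) ^ |d| * (1 / (k * Real.sqrt n)) := by
        gcongr
        rw [abs_of_nonneg (sub_nonneg.2 hab)]
        exact hlen.trans (one_div_two_mul_nat_sqrt_le hk hkN)
    _ = arcBound c lam α β ρ δ d * (1 / (k * Real.sqrt n)) * (n / k) ^ |d| := by ring

end Arc

end

theorem circle_integral_tails_general (T : ℕ) (hTpos : 0 < T)
    (c : ℕ) (α ρ : ℝ) (hρ : |ρ| ≤ ((T : ℝ) - 1) / (2 * T))
    (γ : ℝ) (hγ : 0 < γ) (β : ℝ) (hβ : 0 < β) (δ : ℝ)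
    (d : ℝ) :
    ∃ C > 0, ∀ n : ℕ, 2 ≤ n → ∀ k : ℕ, 1 ≤ k → k ≤ Nat.sqrt n →
      ∀ ϑ₁ ϑ₂ : ℝ,
        1 / (2 * k * (Nat.sqrt n : ℝ)) ≤ ϑ₁ → ϑ₁ ≤ 1 / (k * (Nat.sqrt n : ℝ)) →
        1 / (2 * k * (Nat.sqrt n : ℝ)) ≤ ϑ₂ → ϑ₂ ≤ 1 / (k * (Nat.sqrt n : ℝ)) →
        ‖(∫ φ : ℝ in ϑ₂..(1 / (k * (Nat.sqrt n : ℝ))),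
              ((k : ℂ) / n - I * k * φ) ^ (d : ℂ) *
                Complex.exp (π * ((k : ℂ) / n - I * k * φ) / k * (2 * n + δ)) *
                ((Real.sqrt β * γ / Real.sqrt T : ℝ) *
                  ∫ x : ℝ in (-1 : ℝ)..1,
                    (((Real.sqrt β * γ / Real.sqrt T : ℝ) : ℂ) * x + I * ρ) ^ c *
                        Complex.exp (-(π : ℂ) * β * ((x : ℂ) ^ 2 - 1) /
                            (k * ((k : ℂ) / n - I * k * φ)) +
                          2 * π * (Real.sqrt β * γ / Real.sqrt T : ℝ) * α * x) /
                      Complex.cosh (π *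
                        (((Real.sqrt β * γ / Real.sqrt T : ℝ) : ℂ) * x + I * ρ))))‖ ≤
          C * (1 / (k * Real.sqrt n)) * ((n : ℝ) / k) ^ |d| ∧
        ‖(∫ φ : ℝ in (-(1 / (k * (Nat.sqrt n : ℝ))))..(-ϑ₁),
              ((k : ℂ) / n - I * k * φ) ^ (d : ℂ) *
                Complex.exp (π * ((k : ℂ) / n - I * k * φ) / k * (2 * n + δ)) *
                ((Real.sqrt β * γ / Real.sqrt T : ℝ) *
                  ∫ x : ℝ in (-1 : ℝ)..1,
                    (((Real.sqrt β * γ / Real.sqrt T : ℝ) : ℂ) * x + I * ρ) ^ c *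
                        Complex.exp (-(π : ℂ) * β * ((x : ℂ) ^ 2 - 1) /
                            (k * ((k : ℂ) / n - I * k * φ)) +
                          2 * π * (Real.sqrt β * γ / Real.sqrt T : ℝ) * α * x) /
                      Complex.cosh (π *
                        (((Real.sqrt β * γ / Real.sqrt T : ℝ) : ℂ) * x + I * ρ))))‖ ≤
          C * (1 / (k * Real.sqrt n)) * ((n : ℝ) / k) ^ |d| := by
  have hlam : Real.sqrt β * γ / Real.sqrt T ≠ 0 := by positivity
  have hρ' : |ρ| < 1 / 2 := hρ.trans_lt (by rw [div_lt_iff₀ (by positivity)]; linarith)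
  refine ⟨arcBound c (Real.sqrt β * γ / Real.sqrt T) α β ρ δ d, arcBound_pos hlam hρ',
    fun n _ k hk hkN ϑ₁ ϑ₂ hϑ₁ hϑ₁' hϑ₂ hϑ₂' => ?_⟩
  have hpos : 0 < 1 / (2 * k * (Nat.sqrt n : ℝ)) := by
    have : (0 : ℝ) < k := by exact_mod_cast hk
    have : (0 : ℝ) < Nat.sqrt n := by exact_mod_cast hk.trans hkN
    positivity
  have hhalf : 1 / (k * (Nat.sqrt n : ℝ)) = 2 * (1 / (2 * k * (Nat.sqrt n : ℝ))) := by
    field_simp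
  constructor
  · refine norm_integral_arcIntegrand_le c _ α β δ d hρ' hk hkN hϑ₂' (by linarith)
      fun φ hφ => ?_
    rw [abs_of_pos (by linarith [hφ.1])]
    exact ⟨by linarith [hφ.1], hφ.2⟩
  · refine norm_integral_arcIntegrand_le c _ α β δ d hρ' hk hkN (by linarith) (by linarith)
      fun φ hφ => ?_
    rw [abs_of_neg (by linarith [hφ.2])]
    exact ⟨by linarith [hφ.2], by linarith [hφ.1]⟩

/-- The contributions of the two end pieces `[ϑ'', 1/(kN)]` and `[−1/(kN), −ϑ']` of the
symmetrized circle-method arc are `O((1/(k√n))·(n/k)^{|d|})`. -/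
theorem circle_integral_tails (T : ℕ) (hT : Odd T) (hTpos : 0 < T)
    (c : ℕ) (α ρ : ℝ) (hα : |α| < 1 / 2) (hρ : |ρ| ≤ ((T : ℝ) - 1) / (2 * T))
    (γ : ℝ) (hγ : 0 < γ) (hγT : γ ≤ T) (β : ℝ) (hβ : 0 < β) (δ : ℝ) (hδ : |δ| ≤ 1)
    (d : ℝ) (hd : ∃ m : ℤ, d = m + 1 / 2) :
    ∃ C > 0, ∀ n : ℕ, 2 ≤ n → ∀ k : ℕ, 1 ≤ k → k ≤ Nat.sqrt n →
      ∀ ϑ₁ ϑ₂ : ℝ,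
        1 / (2 * k * (Nat.sqrt n : ℝ)) ≤ ϑ₁ → ϑ₁ ≤ 1 / (k * (Nat.sqrt n : ℝ)) →
        1 / (2 * k * (Nat.sqrt n : ℝ)) ≤ ϑ₂ → ϑ₂ ≤ 1 / (k * (Nat.sqrt n : ℝ)) →
        ‖(∫ φ : ℝ in ϑ₂..(1 / (k * (Nat.sqrt n : ℝ))),
              ((k : ℂ) / n - I * k * φ) ^ (d : ℂ) *
                Complex.exp (π * ((k : ℂ) / n - I * k * φ) / k * (2 * n + δ)) *
                ((Real.sqrt β * γ / Real.sqrt T : ℝ) *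
                  ∫ x : ℝ in (-1 : ℝ)..1,
                    (((Real.sqrt β * γ / Real.sqrt T : ℝ) : ℂ) * x + I * ρ) ^ c *
                        Complex.exp (-(π : ℂ) * β * ((x : ℂ) ^ 2 - 1) /
                            (k * ((k : ℂ) / n - I * k * φ)) +
                          2 * π * (Real.sqrt β * γ / Real.sqrt T : ℝ) * α * x) /
                      Complex.cosh (π *
                        (((Real.sqrt β * γ / Real.sqrt T : ℝ) : ℂ) * x + I * ρ))))‖ ≤
          C * (1 / (k * Real.sqrt n)) * ((n : ℝ) / k) ^ |d| ∧
        ‖(∫ φ : ℝ in (-(1 / (k * (Nat.sqrt n : ℝ))))..(-ϑ₁),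
              ((k : ℂ) / n - I * k * φ) ^ (d : ℂ) *
                Complex.exp (π * ((k : ℂ) / n - I * k * φ) / k * (2 * n + δ)) *
                ((Real.sqrt β * γ / Real.sqrt T : ℝ) *
                  ∫ x : ℝ in (-1 : ℝ)..1,
                    (((Real.sqrt β * γ / Real.sqrt T : ℝ) : ℂ) * x + I * ρ) ^ c *
                        Complex.exp (-(π : ℂ) * β * ((x : ℂ) ^ 2 - 1) /
                            (k * ((k : ℂ) / n - I * k * φ)) +
                          2 * π * (Real.sqrt β * γ / Real.sqrt T : ℝ) * α * x) /
                      Complex.cosh (π *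
                        (((Real.sqrt β * γ / Real.sqrt T : ℝ) : ℂ) * x + I * ρ))))‖ ≤
          C * (1 / (k * Real.sqrt n)) * ((n : ℝ) / k) ^ |d| :=
  circle_integral_tails_general T hTpos c α ρ hρ γ hγ β hβ δ d
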